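/- For a tripartite separable mixed state ρ = Σ_j p_j (σ_j ⊗ τ_j ⊗ ω_j) on ℂ^a ⊗ ℂ^b ⊗ ℂ^c, the rank of the two-party reduced density matrix obtained by tracing out the third factor satisfies rank(Tr_3 ρ) ≤ rank(ρ), and further rank(Tr_2 Tr_3 ρ) ≤ rank(Tr_3 ρ). -/

import Mathlib

open ComplexOrder Matrix Kronecker

/-- Partial trace over the second tensor factor. -/
noncomputable def trV {m n : Type*} [Fintype n] (ρ : Matrix (m × n) (m × n) ℂ) :
    Matrix m m ℂ :=
  fun i i' => ∑ j, ρ (i, j) (i', j)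

/-- Partial trace over the first tensor factor. -/
noncomputable def trU {m n : Type*} [Fintype m] (ρ : Matrix (m × n) (m × n) ℂ) :
    Matrix n n ℂ :=
  fun j j' => ∑ i, ρ (i, j) (i, j')

set_option linter.unusedSectionVars false
set_option linter.unusedVariables false

section Aux
variable {m n : Type*} [Fintype m] [Fintype n] {M : ℕ}

lemma conjT_kron (A : Matrix m m ℂ) (B : Matrix n n ℂ) :
    (A ⊗ₖ B)ᴴ = Aᴴ ⊗ₖ Bᴴ := by
  ext ⟨i, k⟩ ⟨i', k'⟩
  simp [conjTranspose_apply, kroneckerMap_apply, mul_comm]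

lemma psd_kron {A : Matrix m m ℂ} {B : Matrix n n ℂ}
    (hA : A.PosSemidef) (hB : B.PosSemidef) : (A ⊗ₖ B).PosSemidef := by
  exact hA.kronecker hB

lemma sum_mulVec' (A : Fin M → Matrix m m ℂ) (x : m → ℂ) :
    (∑ j, A j) *ᵥ x = ∑ j, (A j) *ᵥ x := by
  ext i
  simp only [Matrix.mulVec, dotProduct, Matrix.sum_apply, Finset.sum_apply, Finset.sum_mul]
  rw [Finset.sum_comm]

lemma dotProduct_sum' (u : m → ℂ) (v : Fin M → m → ℂ) :
    u ⬝ᵥ (∑ j, v j) = ∑ j, u ⬝ᵥ v j := by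
  simp only [dotProduct, Finset.sum_apply, Finset.mul_sum]
  rw [Finset.sum_comm]

lemma sum_smul_mulVec_zero_iff (d : Fin M → ℂ) (hd : ∀ j, 0 < d j)
    (N : Fin M → Matrix m m ℂ) (hN : ∀ j, (N j).PosSemidef) (x : m → ℂ) :
    (∑ j, d j • N j) *ᵥ x = 0 ↔ ∀ j, (N j) *ᵥ x = 0 := by
  constructor
  · intro h
    have h0 : star x ⬝ᵥ (∑ j, d j • N j) *ᵥ x = 0 := by rw [h, dotProduct_zero]
    have hexp : star x ⬝ᵥ (∑ j, d j • N j) *ᵥ x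
        = ∑ j, d j * (star x ⬝ᵥ (N j) *ᵥ x) := by
      rw [sum_mulVec', dotProduct_sum']
      simp [Matrix.smul_mulVec, dotProduct_smul, smul_eq_mul]
    rw [hexp] at h0
    have hterm : ∀ j ∈ Finset.univ, (0:ℂ) ≤ d j * (star x ⬝ᵥ (N j) *ᵥ x) := by
      intro j _
      exact mul_nonneg (hd j).le ((hN j).dotProduct_mulVec_nonneg x)
    intro j
    have := (Finset.sum_eq_zero_iff_of_nonneg hterm).mp h0 j (Finset.mem_univ j)
    have hq : star x ⬝ᵥ (N j) *ᵥ x = 0 := by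
      rcases mul_eq_zero.mp this with h' | h'
      · exact absurd h' (ne_of_gt (hd j))
      · exact h'
    exact ((hN j).dotProduct_mulVec_zero_iff x).mp hq
  · intro h
    rw [sum_mulVec']
    simp [Matrix.smul_mulVec, h]

lemma rank_eq_of_ker_eq (A B : Matrix m m ℂ)
    (h : LinearMap.ker A.mulVecLin = LinearMap.ker B.mulVecLin) : A.rank = B.rank := by
  have ha := A.mulVecLin.finrank_range_add_finrank_ker
  have hb := B.mulVecLin.finrank_range_add_finrank_ker
  rw [h] at ha
  rw [Matrix.rank, Matrix.rank]
  omega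

end Aux

lemma QNCQ {m n : Type*} [Fintype m] [Fintype n] [DecidableEq m]
    (y : n → ℂ) (N : Matrix m m ℂ) (C : Matrix n n ℂ) :
    (Matrix.of fun (i : m) (p : m × n) => if p.1 = i then star (y p.2) else 0) * (N ⊗ₖ C) *
      (Matrix.of fun (i : m) (p : m × n) => if p.1 = i then star (y p.2) else 0)ᴴ
      = (star y ⬝ᵥ C *ᵥ y) • N := by
  ext i i'
  simp only [Matrix.mul_apply, Matrix.conjTranspose_apply, Matrix.of_apply,
    Matrix.kroneckerMap_apply, Matrix.smul_apply, smul_eq_mul, Fintype.sum_prod_type,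
    ite_mul, zero_mul, apply_ite star, star_zero, mul_ite, mul_zero,
    Finset.sum_ite_irrel, Finset.sum_const_zero,
    Finset.sum_ite_eq', Finset.mem_univ, if_true, dotProduct, Matrix.mulVec,
    star_star, Finset.sum_mul, Finset.mul_sum, Pi.star_apply]
  rw [Finset.sum_comm]
  refine Finset.sum_congr rfl fun k _ => Finset.sum_congr rfl fun k' _ => ?_
  ring

lemma key_rank_le {m n : Type*} [Fintype m] [Fintype n] [DecidableEq m] [DecidableEq n] {M : ℕ}
    (d : Fin M → ℂ) (hd : ∀ j, 0 < d j)
    (N : Fin M → Matrix m m ℂ) (hN : ∀ j, (N j).PosSemidef)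
    (C : Fin M → Matrix n n ℂ) (hC : ∀ j, (C j).PosSemidef) (hC0 : ∀ j, C j ≠ 0) :
    (∑ j, d j • N j).rank ≤ (∑ j, d j • (N j ⊗ₖ C j)).rank := by
  -- find a vector y not annihilated by any of the C j
  have hker : ∀ j, LinearMap.ker (C j).mulVecLin ≠ ⊤ := by
    intro j hj
    apply hC0 j
    have h0 : (C j).mulVecLin = 0 := LinearMap.ker_eq_top.mp hj
    ext i k
    have := congrFun (LinearMap.congr_fun h0 (Pi.single k 1)) i
    simpa [Matrix.mulVecLin_apply, Matrix.mulVec_single] using this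
  have hy : ∃ y : n → ℂ, ∀ j, (C j) *ᵥ y ≠ 0 := by
    by_contra h
    push_neg at h
    have hcov : ⋃ j, ((LinearMap.ker (C j).mulVecLin : Submodule ℂ (n → ℂ)) : Set (n → ℂ))
        = Set.univ := by
      ext y
      simp only [Set.mem_iUnion, SetLike.mem_coe, LinearMap.mem_ker,
        Matrix.mulVecLin_apply, Set.mem_univ, iff_true]
      exact h y
    obtain ⟨j, hj⟩ := Subspace.exists_eq_top_of_iUnion_eq_univ hcov
    exact hker j hj
  obtain ⟨y, hy⟩ := hy
  set q : Fin M → ℂ := fun j => star y ⬝ᵥ (C j) *ᵥ y with hqdef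
  have hqpos : ∀ j, 0 < q j := fun j =>
    lt_of_le_of_ne ((hC j).dotProduct_mulVec_nonneg y)
      (fun h => hy j (((hC j).dotProduct_mulVec_zero_iff y).mp h.symm))
  set Q : Matrix m (m × n) ℂ :=
    Matrix.of fun (i : m) (p : m × n) => if p.1 = i then star (y p.2) else 0 with hQ
  have hQρQ : Q * (∑ j, d j • (N j ⊗ₖ C j)) * Qᴴ = ∑ j, (d j * q j) • N j := by
    rw [Matrix.mul_sum, Matrix.sum_mul]
    refine Finset.sum_congr rfl fun j _ => ?_
    rw [Matrix.mul_smul, Matrix.smul_mul, hQ, QNCQ y (N j) (C j), smul_smul, hqdef]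
  have hrk : (∑ j, d j • N j).rank = (∑ j, (d j * q j) • N j).rank := by
    apply rank_eq_of_ker_eq
    ext x
    simp only [LinearMap.mem_ker, Matrix.mulVecLin_apply]
    rw [sum_smul_mulVec_zero_iff d hd N hN x,
      sum_smul_mulVec_zero_iff (fun j => d j * q j)
        (fun j => mul_pos (hd j) (hqpos j)) N hN x]
  rw [hrk, ← hQρQ]
  calc (Q * (∑ j, d j • (N j ⊗ₖ C j)) * Qᴴ).rank
      ≤ (Q * (∑ j, d j • (N j ⊗ₖ C j))).rank := Matrix.rank_mul_le_left _ _
    _ ≤ (∑ j, d j • (N j ⊗ₖ C j)).rank := Matrix.rank_mul_le_right _ _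

lemma trV_sum_kron {m n : Type*} [Fintype n] {M : ℕ} (d : Fin M → ℂ)
    (N : Fin M → Matrix m m ℂ) (C : Fin M → Matrix n n ℂ) (hCtr : ∀ j, (C j).trace = 1) :
    trV (∑ j, d j • (N j ⊗ₖ C j)) = ∑ j, d j • N j := by
  ext i i'
  simp only [trV, Matrix.sum_apply, Matrix.smul_apply, Matrix.kroneckerMap_apply, smul_eq_mul]
  rw [Finset.sum_comm]
  refine Finset.sum_congr rfl fun j _ => ?_
  have : ∑ k, C j k k = (C j).trace := rfl
  rw [← Finset.mul_sum, ← Finset.mul_sum, this, hCtr j, mul_one]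

theorem tripartite_separable_rank_chain (a b c M : ℕ)
    (p : Fin M → ℝ)
    (σ : Fin M → Matrix (Fin a) (Fin a) ℂ)
    (τ : Fin M → Matrix (Fin b) (Fin b) ℂ)
    (ω : Fin M → Matrix (Fin c) (Fin c) ℂ)
    (hp : ∀ j, 0 < p j) (hpsum : ∑ j, p j = 1)
    (hσ : ∀ j, (σ j).PosSemidef) (hσtr : ∀ j, (σ j).trace = 1)
    (hτ : ∀ j, (τ j).PosSemidef) (hτtr : ∀ j, (τ j).trace = 1)
    (hω : ∀ j, (ω j).PosSemidef) (hωtr : ∀ j, (ω j).trace = 1)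
    (ρ : Matrix ((Fin a × Fin b) × Fin c) ((Fin a × Fin b) × Fin c) ℂ)
    (hρ : ρ = ∑ j, (p j : ℂ) • ((σ j ⊗ₖ τ j) ⊗ₖ ω j)) :
    (trV ρ).rank ≤ ρ.rank ∧ (trV (trV ρ)).rank ≤ (trV ρ).rank := by
  subst hρ
  have hd : ∀ j, (0 : ℂ) < (p j : ℂ) := fun j =>
    Complex.zero_lt_real.mpr (hp j)
  have hτ0 : ∀ j, τ j ≠ 0 := fun j h => by
    have := hτtr j; rw [h, Matrix.trace_zero] at this; exact one_ne_zero this.symm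
  have hω0 : ∀ j, ω j ≠ 0 := fun j h => by
    have := hωtr j; rw [h, Matrix.trace_zero] at this; exact one_ne_zero this.symm
  rw [trV_sum_kron _ _ _ hωtr, trV_sum_kron _ _ _ hτtr]
  constructor
  · exact key_rank_le _ hd _ (fun j => psd_kron (hσ j) (hτ j)) _ hω hω0
  · exact key_rank_le _ hd _ hσ _ hτ hτ0
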